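/- Let Λ be an artin algebra and 0 → X →^f M' →^g Y → 0 an (add M)-split sequence in mod Λ. Let V ⊕ 𝐌 be the complex in the homotopy category K(mod Λ), where V is the two-term complex X → M' (M' in degree 0) and 𝐌 is M concentrated in degree 0. Then the endomorphism ring End_{K(mod Λ)}(V ⊕ 𝐌) is isomorphic to End_Λ(Y ⊕ M), via the map taking a homotopy class of chain endomorphisms to the induced endomorphism on the cokernel. -/

import Mathlib

/-!
STATEMENT 19: Let `Λ` be an artin algebra and `0 → X →f M' →g Y → 0` an
`(add M)`-split sequence in `mod Λ`.  Let `V ⊕ 𝐌` be the complex which is the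
direct sum of the two-term complex `V : X → M'` (with `M'` in degree 0) and
the stalk complex `M` in degree 0; concretely it is the two-term complex
`X → M' ⊕ M` with differential `(f, 0)`.  Then the endomorphism ring
`End_{K(mod Λ)}(V ⊕ 𝐌)` in the homotopy category is isomorphic to
`End_Λ(Y ⊕ M)`, via the map sending the homotopy class of a chain
endomorphism to the endomorphism induced on the cokernel (i.e. the unique
endomorphism compatible, in degree 0, with the projection
`q = g ⊕ 𝟙 : M' ⊕ M → Y ⊕ M`).
-/

open CategoryTheory Limits ZeroObject

attribute [local instance] CategoryTheory.Abelian.hasFiniteBiproducts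

universe v u

noncomputable section

variable {A : Type u} [Category.{v} A] [Abelian A]

/-- The two-term cochain complex `⋯ → 0 → X → Y → 0 → ⋯` determined by
`f : X ⟶ Y`, with `X` in degree `-1` and `Y` in degree `0`. -/
def twoTermCx {X Y : A} (f : X ⟶ Y) : CochainComplex A ℤ where
  X n := if n = -1 then X else if n = 0 then Y else 0
  d i j :=
    if h : i = -1 ∧ j = 0 then
      eqToHom (by rw [h.1]; norm_num) ≫ f ≫ eqToHom (by rw [h.2]; norm_num)
    else 0
  shape i j hij := by
    try dsimp only
    rw [dif_neg]
    rintro ⟨rfl, rfl⟩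
    exact hij (by decide)
  d_comp_d' i j k _ _ := by
    try dsimp only
    by_cases h : i = -1 ∧ j = 0
    · obtain ⟨hi, hj⟩ := h
      have hn : ¬ (j = -1 ∧ k = 0) := by rintro ⟨rfl, -⟩; omega
      rw [dif_neg hn, comp_zero]
    · rw [dif_neg h, zero_comp]

/-- `add M`: direct summands of finite direct sums of copies of `M`. -/
def addM (M : A) : Set A :=
  { N | ∃ (k : ℕ) (s : N ⟶ ⨁ (fun _ : Fin k => M)) (r : (⨁ fun _ : Fin k => M) ⟶ N),
      s ≫ r = 𝟙 N }

/-!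
Passing to the cokernel of the differential `X → M' ⊕ M` is a ring homomorphism from chain
endomorphisms to `End (Y ⊕ M)`. Two chain maps have the same image iff their degree-`0`
components differ by a map factoring through `X = ker (g ⊕ 𝟙)`, and such a factorisation
`h : M' ⊕ M → X` is exactly a homotopy between them. The map is onto because every morphism
`M' ⊕ M → Y ⊕ M` lifts along `g ⊕ 𝟙` (`M' ⊕ M ∈ add M` and `g` is a right
`add M`-approximation), and a lift in degree `0` extends to degree `-1` since `X` is the kernel.
-/

namespace CategoryTheory.Functor

variable {C D : Type*} [Category C] [Category D] [Preadditive C] [Preadditive D]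
  (F : C ⥤ D) [F.Full] [F.Additive] {X : C} {R : Type*} [Ring R] (ρ : End X →+* R)
  (hF : ∀ φ ψ : End X, F.map φ = F.map ψ ↔ ρ φ = ρ ψ)

def endRingHomOfFull : End (F.obj X) →+* R where
  toFun η := ρ (F.preimage η)
  map_one' := by
    rw [← ρ.map_one]
    exact (hF _ _).1 (by simp [End.one_def])
  map_mul' η₁ η₂ := by
    rw [← ρ.map_mul]
    exact (hF _ _).1 (by simp [End.mul_def])
  map_zero' := by
    rw [← ρ.map_zero]
    exact (hF _ _).1 (by simp)
  map_add' η₁ η₂ := by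
    rw [← ρ.map_add]
    exact (hF _ _).1 (by simp [F.map_add])

lemma endRingHomOfFull_map (φ : End X) : endRingHomOfFull F ρ hF (F.map φ) = ρ φ :=
  (hF _ _).1 (F.map_preimage _)

def endRingEquivOfFull (hρ : Function.Surjective ρ) : End (F.obj X) ≃+* R :=
  RingEquiv.ofBijective (endRingHomOfFull F ρ hF) <| by
    refine ⟨fun η₁ η₂ h => ?_, fun r => ?_⟩
    · simpa using (hF _ _).2 h
    · obtain ⟨φ, rfl⟩ := hρ r
      exact ⟨F.map φ, endRingHomOfFull_map F ρ hF φ⟩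

lemma endRingEquivOfFull_map (hρ : Function.Surjective ρ) (φ : End X) :
    endRingEquivOfFull F ρ hF hρ (F.map φ) = ρ φ :=
  endRingHomOfFull_map F ρ hF φ

end CategoryTheory.Functor

lemma CategoryTheory.Limits.biproduct.sum_comp_π_ι_comp {J : Type} [Fintype J] (F : J → A)
    [HasBiproduct F] {P Q : A} (a : P ⟶ ⨁ F) (b : ⨁ F ⟶ Q) :
    ∑ j, (a ≫ biproduct.π F j) ≫ biproduct.ι F j ≫ b = a ≫ b := by
  simp only [← Category.assoc, ← Preadditive.sum_comp]
  simp only [Category.assoc, ← Preadditive.comp_sum]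
  rw [biproduct.total, Category.id_comp]

lemma self_mem_addM (M : A) : M ∈ addM M :=
  ⟨1, biproduct.ι (fun _ : Fin 1 => M) 0, biproduct.π _ 0, biproduct.ι_π_self _ _⟩

lemma biprod_mem_addM {M N₁ N₂ : A} (h₁ : N₁ ∈ addM M) (h₂ : N₂ ∈ addM M) :
    (N₁ ⊞ N₂ : A) ∈ addM M := by
  obtain ⟨k, s₁, r₁, hsr₁⟩ := h₁
  obtain ⟨l, s₂, r₂, hsr₂⟩ := h₂
  refine ⟨k + l,
    biproduct.lift (Fin.addCases
      (fun i => (biprod.fst ≫ s₁) ≫ biproduct.π (fun _ : Fin k => M) i)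
      (fun j => (biprod.snd ≫ s₂) ≫ biproduct.π (fun _ : Fin l => M) j)),
    biproduct.desc (Fin.addCases
      (fun i => biproduct.ι (fun _ : Fin k => M) i ≫ r₁ ≫ biprod.inl)
      (fun j => biproduct.ι (fun _ : Fin l => M) j ≫ r₂ ≫ biprod.inr)), ?_⟩
  rw [biproduct.lift_desc, Fin.sum_univ_add]
  simp only [Fin.addCases_left, Fin.addCases_right]
  rw [biproduct.sum_comp_π_ι_comp, biproduct.sum_comp_π_ι_comp, Category.assoc, Category.assoc,
    reassoc_of% hsr₁, reassoc_of% hsr₂, biprod.total]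

def CategoryTheory.ShortComplex.biprodId (S : ShortComplex A) (M : A) : ShortComplex A :=
  ShortComplex.mk (S.f ≫ biprod.inl) (biprod.map S.g (𝟙 M)) (by simp)

lemma CategoryTheory.ShortComplex.ShortExact.biprodId {S : ShortComplex A} (hS : S.ShortExact)
    (M : A) : (S.biprodId M).ShortExact := by
  have := hS.mono_f
  have := hS.epi_g
  refine { exact := ?_, mono_f := ?_, epi_g := ?_ }
  · rw [ShortComplex.exact_iff_exact_up_to_refinements]
    intro P (x₂ : P ⟶ S.X₂ ⊞ M) hx₂
    replace hx₂ : x₂ ≫ biprod.map S.g (𝟙 M) = 0 := hx₂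
    have h₁ : (x₂ ≫ biprod.fst) ≫ S.g = 0 := by
      rw [Category.assoc, ← biprod.map_fst S.g (𝟙 M), reassoc_of% hx₂, zero_comp]
    have h₂ : x₂ ≫ biprod.snd = 0 := by
      simpa using hx₂ =≫ (biprod.snd : S.X₃ ⊞ M ⟶ M)
    obtain ⟨P', π, hπ, x₁, hx₁⟩ := hS.exact.exact_up_to_refinements _ h₁
    refine ⟨P', π, hπ, x₁, ?_⟩
    apply biprod.hom_ext <;> simp [ShortComplex.biprodId, hx₁, h₂]
  · dsimp [ShortComplex.biprodId]; infer_instance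
  · dsimp [ShortComplex.biprodId]; infer_instance


namespace twoTermCx

variable {X Z X' Z' : A} (ι : X ⟶ Z) (ι' : X' ⟶ Z')

lemma X_neg_one : (twoTermCx ι).X (-1) = X := by norm_num [twoTermCx]

lemma X_zero : (twoTermCx ι).X 0 = Z := by norm_num [twoTermCx]

lemma isZero_X {i : ℤ} (h₁ : i ≠ -1) (h₀ : i ≠ 0) : IsZero ((twoTermCx ι).X i) := by
  simp only [twoTermCx, if_neg h₁, if_neg h₀]
  exact isZero_zero A

lemma d_neg_one_zero :
    (twoTermCx ι).d (-1) 0 = eqToHom (X_neg_one ι) ≫ ι ≫ eqToHom (X_zero ι).symm := by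
  simp only [twoTermCx]
  rw [dif_pos (by simp)]

lemma d_eq_zero {i j : ℤ} (h : ¬(i = -1 ∧ j = 0)) : (twoTermCx ι).d i j = 0 := by
  simp only [twoTermCx]
  rw [dif_neg h]
  rfl

variable {ι ι'}

def f₀ (φ : twoTermCx ι ⟶ twoTermCx ι') : Z ⟶ Z' :=
  eqToHom (X_zero ι).symm ≫ φ.f 0 ≫ eqToHom (X_zero ι')

def fNegOne (φ : twoTermCx ι ⟶ twoTermCx ι') : X ⟶ X' :=
  eqToHom (X_neg_one ι).symm ≫ φ.f (-1) ≫ eqToHom (X_neg_one ι')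

lemma f_zero_eq (φ : twoTermCx ι ⟶ twoTermCx ι') :
    φ.f 0 = eqToHom (X_zero ι) ≫ f₀ φ ≫ eqToHom (X_zero ι').symm := by
  simp [f₀]

lemma f_neg_one_eq (φ : twoTermCx ι ⟶ twoTermCx ι') :
    φ.f (-1) = eqToHom (X_neg_one ι) ≫ fNegOne φ ≫ eqToHom (X_neg_one ι').symm := by
  simp [fNegOne]

lemma comm (φ : twoTermCx ι ⟶ twoTermCx ι') : ι ≫ f₀ φ = fNegOne φ ≫ ι' := by
  have h := φ.comm (-1) 0
  rw [d_neg_one_zero, d_neg_one_zero, f_zero_eq φ, f_neg_one_eq φ] at h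
  simpa using congrArg (eqToHom (X_neg_one ι).symm ≫ · ≫ eqToHom (X_zero ι')) h.symm

@[simp]
lemma f₀_id : f₀ (𝟙 (twoTermCx ι)) = 𝟙 Z := by
  simp [f₀]

@[simp]
lemma f₀_comp {X'' Z'' : A} {ι'' : X'' ⟶ Z''} (φ : twoTermCx ι ⟶ twoTermCx ι')
    (ψ : twoTermCx ι' ⟶ twoTermCx ι'') : f₀ (φ ≫ ψ) = f₀ φ ≫ f₀ ψ := by
  simp [f₀]

@[simp]
lemma f₀_zero : f₀ (0 : twoTermCx ι ⟶ twoTermCx ι') = 0 := by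
  simp [f₀]

@[simp]
lemma f₀_add (φ ψ : twoTermCx ι ⟶ twoTermCx ι') : f₀ (φ + ψ) = f₀ φ + f₀ ψ := by
  simp [f₀]

def homMk (a : X ⟶ X') (b : Z ⟶ Z') (h : ι ≫ b = a ≫ ι') : twoTermCx ι ⟶ twoTermCx ι' where
  f i :=
    if h₁ : i = -1 then
      eqToHom (by rw [h₁]; exact X_neg_one ι) ≫ a ≫
        eqToHom (by rw [h₁]; exact (X_neg_one ι').symm)
    else if h₀ : i = 0 then
      eqToHom (by rw [h₀]; exact X_zero ι) ≫ b ≫ eqToHom (by rw [h₀]; exact (X_zero ι').symm)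
    else 0
  comm' i j _ := by
    by_cases hij : i = -1 ∧ j = 0
    · obtain ⟨rfl, rfl⟩ := hij
      simp [d_neg_one_zero, reassoc_of% h]
    · rw [d_eq_zero ι hij, d_eq_zero ι' hij, comp_zero, zero_comp]

@[simp]
lemma f₀_homMk (a : X ⟶ X') (b : Z ⟶ Z') (h : ι ≫ b = a ≫ ι') : f₀ (homMk a b h) = b := by
  simp [f₀, homMk]

def homotopyMk (φ ψ : twoTermCx ι ⟶ twoTermCx ι') (h : Z ⟶ X')
    (h₀ : f₀ φ = h ≫ ι' + f₀ ψ) (h₁ : fNegOne φ = ι ≫ h + fNegOne ψ) : Homotopy φ ψ where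
  hom i j :=
    if hij : i = 0 ∧ j = -1 then
      eqToHom (by rw [hij.1]; exact X_zero ι) ≫ h ≫
        eqToHom (by rw [hij.2]; exact (X_neg_one ι').symm)
    else 0
  zero i j hij := by
    rw [dif_neg]
    rintro ⟨rfl, rfl⟩
    exact hij (by decide)
  comm i := by
    by_cases hi₁ : i = -1
    · subst hi₁
      rw [dNext_eq _ (show (ComplexShape.up ℤ).Rel (-1) 0 by simp),
        prevD_eq _ (show (ComplexShape.up ℤ).Rel (-2) (-1) by simp), d_neg_one_zero,
        d_eq_zero ι' (i := -2) (by omega), f_neg_one_eq φ, f_neg_one_eq ψ, h₁]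
      simp
    by_cases hi₀ : i = 0
    · subst hi₀
      rw [dNext_eq _ (show (ComplexShape.up ℤ).Rel 0 1 by simp),
        prevD_eq _ (show (ComplexShape.up ℤ).Rel (-1) 0 by simp), d_neg_one_zero,
        d_eq_zero ι (j := 1) (by omega), f_zero_eq φ, f_zero_eq ψ, h₀]
      simp
    exact (isZero_X ι hi₁ hi₀).eq_of_src _ _

lemma exists_f₀_eq_of_homotopy {φ ψ : twoTermCx ι ⟶ twoTermCx ι'} (H : Homotopy φ ψ) :
    ∃ h : Z ⟶ X', f₀ φ = h ≫ ι' + f₀ ψ := by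
  refine ⟨eqToHom (X_zero ι).symm ≫ H.hom 0 (-1) ≫ eqToHom (X_neg_one ι'), ?_⟩
  have h := H.comm 0
  rw [dNext_eq _ (show (ComplexShape.up ℤ).Rel 0 1 by simp),
    prevD_eq _ (show (ComplexShape.up ℤ).Rel (-1) 0 by simp), d_neg_one_zero,
    d_eq_zero ι (j := 1) (by omega)] at h
  simp [f₀, h]

end twoTermCx

namespace twoTermCx

variable {S S' : ShortComplex A} (hS : S.ShortExact)

def cokernelMap (φ : twoTermCx S.f ⟶ twoTermCx S'.f) : S.X₃ ⟶ S'.X₃ :=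
  have := hS.epi_g
  hS.exact.desc (f₀ φ ≫ S'.g) <| by
    rw [← Category.assoc, comm, Category.assoc, S'.zero, comp_zero]

lemma g_comp_cokernelMap (φ : twoTermCx S.f ⟶ twoTermCx S'.f) :
    S.g ≫ cokernelMap hS φ = f₀ φ ≫ S'.g :=
  have := hS.epi_g
  hS.exact.g_desc _ _

lemma cokernelMap_eq_iff (φ ψ : twoTermCx S.f ⟶ twoTermCx S'.f) :
    cokernelMap hS φ = cokernelMap hS ψ ↔ f₀ φ ≫ S'.g = f₀ ψ ≫ S'.g := by
  have := hS.epi_g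
  rw [← cancel_epi S.g, g_comp_cokernelMap, g_comp_cokernelMap]

lemma cokernelMap_id : cokernelMap hS (𝟙 (twoTermCx S.f)) = 𝟙 S.X₃ := by
  have := hS.epi_g
  simp [← cancel_epi S.g, g_comp_cokernelMap]

lemma cokernelMap_comp {S'' : ShortComplex A} (hS' : S'.ShortExact)
    (φ : twoTermCx S.f ⟶ twoTermCx S'.f) (ψ : twoTermCx S'.f ⟶ twoTermCx S''.f) :
    cokernelMap hS (φ ≫ ψ) = cokernelMap hS φ ≫ cokernelMap hS' ψ := by
  have := hS.epi_g
  simp [← cancel_epi S.g, g_comp_cokernelMap, reassoc_of% (g_comp_cokernelMap hS φ)]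

lemma cokernelMap_zero : cokernelMap hS (0 : twoTermCx S.f ⟶ twoTermCx S'.f) = 0 := by
  have := hS.epi_g
  simp [← cancel_epi S.g, g_comp_cokernelMap]

lemma cokernelMap_add (φ ψ : twoTermCx S.f ⟶ twoTermCx S'.f) :
    cokernelMap hS (φ + ψ) = cokernelMap hS φ + cokernelMap hS ψ := by
  have := hS.epi_g
  simp [← cancel_epi S.g, g_comp_cokernelMap]

@[simps]
def cokernelEndRingHom : End (twoTermCx S.f) →+* End S.X₃ where
  toFun := cokernelMap hS
  map_one' := cokernelMap_id hS
  map_mul' φ ψ := cokernelMap_comp hS hS ψ φ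
  map_zero' := cokernelMap_zero hS
  map_add' := cokernelMap_add hS

lemma quotient_map_eq_iff_cokernelMap_eq (hS' : S'.ShortExact)
    (φ ψ : twoTermCx S.f ⟶ twoTermCx S'.f) :
    (HomotopyCategory.quotient A (ComplexShape.up ℤ)).map φ =
        (HomotopyCategory.quotient A (ComplexShape.up ℤ)).map ψ ↔
      cokernelMap hS φ = cokernelMap hS ψ := by
  have := hS'.mono_f
  rw [cokernelMap_eq_iff]
  constructor
  · intro hφψ
    obtain ⟨h, hh⟩ := exists_f₀_eq_of_homotopy (HomotopyCategory.homotopyOfEq _ _ hφψ)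
    rw [hh, Preadditive.add_comp, Category.assoc, S'.zero, comp_zero, zero_add]
  · intro hφψ
    set h := hS'.exact.lift (f₀ φ - f₀ ψ) (by rw [Preadditive.sub_comp, hφψ, sub_self])
    have h₀ : f₀ φ = h ≫ S'.f + f₀ ψ := by rw [hS'.exact.lift_f]; abel
    have h₁ : fNegOne φ = S.f ≫ h + fNegOne ψ := by
      rw [← cancel_mono S'.f, ← comm, h₀, Preadditive.add_comp, Preadditive.comp_add, comm]
      simp
    exact HomotopyCategory.eq_of_homotopy _ _ (homotopyMk φ ψ h h₀ h₁)

lemma cokernelMap_surjective (hS' : S'.ShortExact)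
    (hlift : ∀ t : S.X₂ ⟶ S'.X₃, ∃ b : S.X₂ ⟶ S'.X₂, b ≫ S'.g = t) :
    Function.Surjective (cokernelMap hS (S' := S')) := by
  have := hS.epi_g
  have := hS'.mono_f
  intro ψ
  obtain ⟨b, hb⟩ := hlift (S.g ≫ ψ)
  set a := hS'.exact.lift (S.f ≫ b) (by rw [Category.assoc, hb, S.zero_assoc, zero_comp])
  refine ⟨homMk a b (hS'.exact.lift_f _ _).symm, ?_⟩
  rw [← cancel_epi S.g, g_comp_cokernelMap, f₀_homMk, hb]

def homotopyEndRingEquiv (hlift : ∀ t : S.X₂ ⟶ S.X₃, ∃ b : S.X₂ ⟶ S.X₂, b ≫ S.g = t) :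
    End ((HomotopyCategory.quotient A (ComplexShape.up ℤ)).obj (twoTermCx S.f)) ≃+* End S.X₃ :=
  (HomotopyCategory.quotient A (ComplexShape.up ℤ)).endRingEquivOfFull (cokernelEndRingHom hS)
    (fun φ ψ => by
      rw [cokernelEndRingHom_apply, cokernelEndRingHom_apply]
      exact quotient_map_eq_iff_cokernelMap_eq hS hS φ ψ)
    (show Function.Surjective (cokernelEndRingHom hS) from fun ψ => by
      obtain ⟨φ, hφ⟩ := cokernelMap_surjective hS hS hlift ψ
      exact ⟨φ, hφ⟩)

lemma g_comp_homotopyEndRingEquiv_map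
    (hlift : ∀ t : S.X₂ ⟶ S.X₃, ∃ b : S.X₂ ⟶ S.X₂, b ≫ S.g = t) (φ : End (twoTermCx S.f)) :
    S.g ≫ homotopyEndRingEquiv hS hlift ((HomotopyCategory.quotient A _).map φ) =
      f₀ φ ≫ S.g := by
  rw [homotopyEndRingEquiv, Functor.endRingEquivOfFull_map, cokernelEndRingHom_apply,
    g_comp_cokernelMap]

end twoTermCx

theorem stmt19 (Λ : Type u) [Ring Λ]
    (X M' Y M : ModuleCat.{u} Λ)
    (f : X ⟶ M') (g : M' ⟶ Y) (w : f ≫ g = 0)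
    (hses : (ShortComplex.mk f g w).ShortExact)
    (hM' : M' ∈ addM M)
    (hright : ∀ N ∈ addM M, ∀ ψ : N ⟶ Y, ∃ h : N ⟶ M', h ≫ g = ψ) :
    ∃ Φ :
      End ((HomotopyCategory.quotient (ModuleCat.{u} Λ) (ComplexShape.up ℤ)).obj
        (twoTermCx (f ≫ (biprod.inl : M' ⟶ M' ⊞ M)))) ≃+*
        End (Y ⊞ M),
      ∀ φ : twoTermCx (f ≫ (biprod.inl : M' ⟶ M' ⊞ M)) ⟶
          twoTermCx (f ≫ (biprod.inl : M' ⟶ M' ⊞ M)),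
        (eqToHom (by norm_num [twoTermCx]) ≫ φ.f 0 ≫
            eqToHom (by norm_num [twoTermCx]) :
            (M' ⊞ M : ModuleCat.{u} Λ) ⟶ (M' ⊞ M : ModuleCat.{u} Λ)) ≫
            biprod.map g (𝟙 M) =
          biprod.map g (𝟙 M) ≫
            Φ ((HomotopyCategory.quotient (ModuleCat.{u} Λ)
              (ComplexShape.up ℤ)).map φ) := by
  have hlift (t : M' ⊞ M ⟶ Y ⊞ M) : ∃ b : M' ⊞ M ⟶ M' ⊞ M, b ≫ biprod.map g (𝟙 M) = t := by
    obtain ⟨b, hb⟩ := hright _ (biprod_mem_addM hM' (self_mem_addM M)) (t ≫ biprod.fst)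
    exact ⟨biprod.lift b (t ≫ biprod.snd), by apply biprod.hom_ext <;> simp [hb]⟩
  exact ⟨twoTermCx.homotopyEndRingEquiv (hses.biprodId M) hlift,
    fun φ => (twoTermCx.g_comp_homotopyEndRingEquiv_map (hses.biprodId M) hlift φ).symm⟩
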